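/- For every integer k ≥ 1 and every ε > 0 there exists δ > 0 such that for any probability space (Ω₂,ℙ₂) and any two P-variables U, W : [0,1] × [0,1] × Ω₂ → ℝ with d_M(U,W) ≤ δ, the quotient sets of the associated probability graphons satisfy: for every quotient R ∈ Q_k(W̃) there exists R' ∈ Q_k(Ũ) with d₁(R,R') ≤ ε, and vice versa; i.e. d_{1,H}(Q_k(W̃), Q_k(Ũ)) ≤ ε. In particular, if a sequence (W_n) of such P-variables is Cauchy in d_M, then for every k ≥ 1 the sequence of quotient sets (Q_k(W̃_n)) is Cauchy in the Hausdorff metric d_{1,H}. -/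

import Mathlib

set_option autoImplicit false

open MeasureTheory Set
open scoped ENNReal NNReal

noncomputable section

/-- `ℝ^n` with the Euclidean metric. -/
abbrev RE (n : ℕ) : Type := EuclideanSpace ℝ (Fin n)

/-- The random vector `(f₁(x₁), f₁(x₂), …, f_k(x₁), f_k(x₂), W(x₁,x₂,x₁₂))`. -/
def sVec {Ω₁ Ω₂ : Type*} (k : ℕ) (f : Fin k → Ω₁ → ℝ)
    (W : Ω₁ × Ω₁ × Ω₂ → ℝ) (x : Ω₁ × Ω₁ × Ω₂) : RE (2 * k + 1) :=
  (WithLp.equiv 2 (Fin (2 * k + 1) → ℝ)).symm fun i =>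
    if _ : (i : ℕ) < 2 * k then
      if (i : ℕ) % 2 = 0 then f ⟨(i : ℕ) / 2, by omega⟩ x.1
      else f ⟨(i : ℕ) / 2, by omega⟩ x.2.1
    else W x

/-- `S(f₁,…,f_k,W)`: the pushforward of the product measure `P₁ ⊗ P₁ ⊗ P₂` under `sVec`. -/
def Smeasure {Ω₁ Ω₂ : Type*} [MeasurableSpace Ω₁] [MeasurableSpace Ω₂]
    (P₁ : Measure Ω₁) (P₂ : Measure Ω₂) {k : ℕ} (f : Fin k → Ω₁ → ℝ)
    (W : Ω₁ × Ω₁ × Ω₂ → ℝ) : Measure (RE (2 * k + 1)) :=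
  (P₁.prod (P₁.prod P₂)).map (sVec k f W)

/-- The `k`-profile `S_k(W)`. -/
def SkSet {Ω₁ Ω₂ : Type*} [MeasurableSpace Ω₁] [MeasurableSpace Ω₂]
    (P₁ : Measure Ω₁) (P₂ : Measure Ω₂) (k : ℕ)
    (W : Ω₁ × Ω₁ × Ω₂ → ℝ) : Set (Measure (RE (2 * k + 1))) :=
  {μ | ∃ f : Fin k → Ω₁ → ℝ, (∀ i, Measurable (f i)) ∧
    (∀ i x, f i x ∈ Icc (-1 : ℝ) 1) ∧ μ = Smeasure P₁ P₂ f W}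

/-- A function partition: `{0,1}`-valued measurable functions summing to `1`. -/
def IsFunctionPartition {Ω₁ : Type*} [MeasurableSpace Ω₁] {k : ℕ}
    (f : Fin k → Ω₁ → ℝ) : Prop :=
  (∀ i, Measurable (f i)) ∧ (∀ i x, f i x = 0 ∨ f i x = 1) ∧ ∀ x, ∑ i, f i x = 1

/-- The restricted `k`-profile `S'_k(W)`. -/
def SkSet' {Ω₁ Ω₂ : Type*} [MeasurableSpace Ω₁] [MeasurableSpace Ω₂]
    (P₁ : Measure Ω₁) (P₂ : Measure Ω₂) (k : ℕ)
    (W : Ω₁ × Ω₁ × Ω₂ → ℝ) : Set (Measure (RE (2 * k + 1))) :=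
  {μ | ∃ f : Fin k → Ω₁ → ℝ, IsFunctionPartition f ∧ μ = Smeasure P₁ P₂ f W}

/-- Hausdorff edistance (w.r.t. the Lévy–Prokhorov distance) between sets of measures. -/
def eHausLP {X : Type*} [MeasurableSpace X] [PseudoEMetricSpace X]
    (A B : Set (Measure X)) : ℝ≥0∞ :=
  max (⨆ μ ∈ A, ⨅ ν ∈ B, levyProkhorovEDist μ ν)
      (⨆ ν ∈ B, ⨅ μ ∈ A, levyProkhorovEDist μ ν)

/-- Hausdorff distance (w.r.t. the Lévy–Prokhorov distance) between sets of measures. -/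
def dHLP {X : Type*} [MeasurableSpace X] [PseudoEMetricSpace X]
    (A B : Set (Measure X)) : ℝ := (eHausLP A B).toReal

/-- A `P`-variable: a measurable real-valued function on a product `Ω₁ × Ω₁ × Ω₂`
of probability spaces. -/
structure PVar where
  (Ω₁ : Type*)
  (Ω₂ : Type*)
  [m₁ : MeasurableSpace Ω₁]
  [m₂ : MeasurableSpace Ω₂]
  (P₁ : Measure Ω₁)
  (P₂ : Measure Ω₂)
  (prob₁ : IsProbabilityMeasure P₁)
  (prob₂ : IsProbabilityMeasure P₂)
  (W : Ω₁ × Ω₁ × Ω₂ → ℝ)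
  (meas : Measurable W)

attribute [instance] PVar.m₁ PVar.m₂

/-- The underlying product probability measure of a `P`-variable. -/
def PVar.vol (V : PVar) : Measure (V.Ω₁ × V.Ω₁ × V.Ω₂) := V.P₁.prod (V.P₁.prod V.P₂)

/-- The `k`-profile of a `P`-variable. -/
def PVar.Sk (V : PVar) (k : ℕ) : Set (Measure (RE (2 * k + 1))) := SkSet V.P₁ V.P₂ k V.W

/-- The restricted `k`-profile of a `P`-variable. -/
def PVar.Sk' (V : PVar) (k : ℕ) : Set (Measure (RE (2 * k + 1))) := SkSet' V.P₁ V.P₂ k V.W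

/-- The `P`-variables metric `d_M`. -/
def dM (V U : PVar) : ℝ :=
  ∑' k : ℕ, (2 : ℝ)⁻¹ ^ (k + 1) * dHLP (V.Sk (k + 1)) (U.Sk (k + 1))


/-- The probability graphon (Markov kernel `[0,1]² → 𝒫(ℝ)`) associated to a
P-variable on `[0,1] × [0,1] × Ω₂`: `W̃(x₁,x₂;·)` is the law of `W(x₁,x₂,·)`. -/
def assocGraphon {Ω₂ : Type*} [MeasurableSpace Ω₂] (P₂ : Measure Ω₂)
    (W : unitInterval × unitInterval × Ω₂ → ℝ)
    (x : unitInterval × unitInterval) : Measure ℝ :=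
  P₂.map fun ω => W (x.1, x.2, ω)

/-- `W̃(A;·) = ∫_A W̃(x,y;·) dx dy` for measurable `A ⊆ [0,1]²`. -/
def graphonInt (K : unitInterval × unitInterval → Measure ℝ)
    (A : Set (unitInterval × unitInterval)) : Measure ℝ :=
  (((volume : Measure unitInterval).prod volume).restrict A).bind K

/-- The cut semidistance `d_□` between two probability graphons on `[0,1]`:
`sup_{S,T} d_LP(K(S×T;·), L(S×T;·))` over measurable `S, T ⊆ [0,1]`. -/
def cutDistKer (K L : unitInterval × unitInterval → Measure ℝ) : ℝ :=
  ⨆ p : {S : Set unitInterval // MeasurableSet S} ×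
        {T : Set unitInterval // MeasurableSet T},
    levyProkhorovDist (graphonInt K (p.1.1 ×ˢ p.2.1)) (graphonInt L (p.1.1 ×ˢ p.2.1))

/-- The unlabelled cut distance `δ_□`: infimum of `d_□(K, L∘(φ×φ))` over
Lebesgue-measure-preserving bijections `φ` of `[0,1]`. -/
def unlabCutDist (K L : unitInterval × unitInterval → Measure ℝ) : ℝ :=
  ⨅ φ : {φ : unitInterval ≃ᵐ unitInterval //
          MeasurePreserving φ (volume : Measure unitInterval) volume},
    cutDistKer K fun x => L (φ.1 x.1, φ.1 x.2)

/-- A P-variable on `[0,1] × [0,1] × Ω₂` (with Lebesgue measure on `[0,1]`),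
bundled as a `PVar`. -/
def PVar.ofUnitInterval {Ω₂ : Type*} [MeasurableSpace Ω₂] (P₂ : Measure Ω₂)
    [h₂ : IsProbabilityMeasure P₂] (W : unitInterval × unitInterval × Ω₂ → ℝ)
    (hW : Measurable W) : PVar :=
  ⟨unitInterval, Ω₂, (volume : Measure unitInterval), P₂, inferInstance, h₂, W, hW⟩

attribute [local instance] Classical.propDecidable

/-- The quotient graph `W̃/𝒫` of a probability graphon `K` with respect to a measurable
`k`-partition `𝒫 = {P₁,…,P_k}` of `[0,1]`: vertex weights `α_i = λ(P_i)` and edge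
decorations `β_{ij} = (λ(P_i)λ(P_j))⁻¹ K(P_i × P_j; ·)` (the null measure if
`λ(P_i)λ(P_j) = 0`). -/
def quotientOf (K : unitInterval × unitInterval → Measure ℝ) {k : ℕ}
    (P : Fin k → Set unitInterval) :
    (Fin k → ℝ) × (Fin k → Fin k → Measure ℝ) :=
  (fun i => ((volume : Measure unitInterval) (P i)).toReal,
   fun i j =>
     if 0 < (volume : Measure unitInterval) (P i) *
            (volume : Measure unitInterval) (P j) then
       ((volume : Measure unitInterval) (P i) *
         (volume : Measure unitInterval) (P j))⁻¹ • graphonInt K (P i ×ˢ P j)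
     else 0)

/-- The quotient set `Q_k(K)`: all quotients of `K` over measurable `k`-partitions. -/
def Qk (K : unitInterval × unitInterval → Measure ℝ) (k : ℕ) :
    Set ((Fin k → ℝ) × (Fin k → Fin k → Measure ℝ)) :=
  {q | ∃ P : Fin k → Set unitInterval, (∀ i, MeasurableSet (P i)) ∧
    Pairwise (Function.onFun Disjoint P) ∧ (⋃ i, P i) = univ ∧ q = quotientOf K P}

/-- The distance `d₁` between two quotients:
`Σ_i |α_i − α'_i| + Σ_{i,j} d_LP(α_iα_jβ_{ij}, α'_iα'_jβ'_{ij})`. -/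
def d1 {k : ℕ} (q q' : (Fin k → ℝ) × (Fin k → Fin k → Measure ℝ)) : ℝ :=
  ∑ i, |q.1 i - q'.1 i| +
    ∑ i, ∑ j, levyProkhorovDist
      (ENNReal.ofReal (q.1 i * q.1 j) • q.2 i j)
      (ENNReal.ofReal (q'.1 i * q'.1 j) • q'.2 i j)

/-- The Hausdorff distance `d_{1,H}` between sets of quotients, induced by `d₁`. -/
def d1H {k : ℕ} (A B : Set ((Fin k → ℝ) × (Fin k → Fin k → Measure ℝ))) : ℝ :=
  (max (⨆ q ∈ A, ⨅ q' ∈ B, ENNReal.ofReal (d1 q q'))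
       (⨆ q' ∈ B, ⨅ q ∈ A, ENNReal.ofReal (d1 q q'))).toReal

universe u

/-!
A partition `P` of `[0,1]` gives the test functions `1_{P i} ∈ S_k(W)`. If `d_M(U, W)` is small,
then `S_k(U)` and `S_k(W)` are Hausdorff-close, so some `g` gives `S(g, U)` Lévy–Prokhorov-close
to `S(1_P, W)`. Thresholding `g` at `1/2` gives sets `G i = {g i > 1/2}` that behave like the
`P i`: the laws of `(1_{P i}(x₁), 1_{P j}(x₂), W)` and `(g i(x₁), g j(x₂), U)` are close, so the
edge measures over `P i × P j` and over `G i × G j` are close, and the set of points lying in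
other than exactly one `G i` is small (an indicator vector is far from all such vectors).
Moving those few points turns `G` into a genuine partition `Q` without spoiling the estimates,
and the vertex weights `λ(P i)` are recovered as row sums of the edge masses. Hence
`d₁(W̃/P, Ũ/Q) = O(k² η)`, and symmetrically.
-/

open Metric

section LevyProkhorov

variable {X : Type*} [MeasurableSpace X] [PseudoEMetricSpace X]

lemma eHausLP_comm (A B : Set (Measure X)) : eHausLP A B = eHausLP B A := by
  simp only [eHausLP, levyProkhorovEDist_comm, max_comm]

lemma exists_levyProkhorovEDist_lt_of_eHausLP_lt {A B : Set (Measure X)} {c : ℝ≥0∞}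
    (h : eHausLP A B < c) {μ : Measure X} (hμ : μ ∈ A) :
    ∃ ν ∈ B, levyProkhorovEDist μ ν < c := by
  have : ⨅ ν ∈ B, levyProkhorovEDist μ ν < c :=
    (le_iSup₂ (f := fun μ (_ : μ ∈ A) => ⨅ ν ∈ B, levyProkhorovEDist μ ν) μ hμ).trans_lt
      ((le_max_left _ _).trans_lt h)
  simpa only [iInf_lt_iff, exists_prop] using this

lemma eHausLP_le_one {A B : Set (Measure X)} (hA : A.Nonempty) (hB : B.Nonempty)
    (hA₁ : ∀ μ ∈ A, IsProbabilityMeasure μ) (hB₁ : ∀ ν ∈ B, IsProbabilityMeasure ν) :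
    eHausLP A B ≤ 1 := by
  have key : ∀ μ ∈ A, ∀ ν ∈ B, levyProkhorovEDist μ ν ≤ 1 := fun μ hμ ν hν => by
    have := hA₁ μ hμ
    have := hB₁ ν hν
    simpa using levyProkhorovEDist_le_max_measure_univ μ ν
  obtain ⟨μ₀, hμ₀⟩ := hA
  obtain ⟨ν₀, hν₀⟩ := hB
  exact max_le (iSup₂_le fun μ hμ => (iInf₂_le ν₀ hν₀).trans (key μ hμ ν₀ hν₀))
    (iSup₂_le fun ν hν => (iInf₂_le μ₀ hμ₀).trans (key μ₀ hμ₀ ν hν))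

lemma levyProkhorovEDist_le_of_forall_le_thickening {μ ν : Measure X} {r s : ℝ} (hrs : r ≤ s)
    (h : ∀ B, MeasurableSet B → μ B ≤ ν (thickening r B) + ENNReal.ofReal s ∧
      ν B ≤ μ (thickening r B) + ENNReal.ofReal s) :
    levyProkhorovEDist μ ν ≤ ENNReal.ofReal s := by
  refine levyProkhorovEDist_le_of_forall _ _ _ fun ε B hε hε_top hB => ?_
  have hr : r ≤ ε.toReal :=
    (ENNReal.ofReal_le_iff_le_toReal hε_top.ne).1 ((ENNReal.ofReal_le_ofReal hrs).trans hε.le)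
  have mono {ρ : Measure X} : ρ (thickening r B) ≤ ρ (thickening ε.toReal B) :=
    measure_mono (thickening_mono hr B)
  exact ⟨(h B hB).1.trans (add_le_add mono hε.le), (h B hB).2.trans (add_le_add mono hε.le)⟩

end LevyProkhorov

lemma ENNReal.abs_toReal_sub_le {a b : ℝ≥0∞} {c : ℝ} (ha : a ≠ ∞) (hb : b ≠ ∞) (hc : 0 ≤ c)
    (hab : a ≤ b + ENNReal.ofReal c) (hba : b ≤ a + ENNReal.ofReal c) :
    |a.toReal - b.toReal| ≤ c := by
  have key {x y : ℝ≥0∞} (hy : y ≠ ∞) (h : x ≤ y + ENNReal.ofReal c) :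
      x.toReal ≤ y.toReal + c := by
    simpa [ENNReal.toReal_add hy ENNReal.ofReal_ne_top, hc] using
      ENNReal.toReal_mono (ENNReal.add_ne_top.2 ⟨hy, ENNReal.ofReal_ne_top⟩) h
  rw [abs_sub_le_iff]
  constructor <;> linarith [key hb hab, key ha hba]

section Partition

variable {α ι : Type*}

structure IsMeasurablePartition [MeasurableSpace α] (P : ι → Set α) : Prop where
  measurableSet : ∀ i, MeasurableSet (P i)
  pairwise_disjoint : Pairwise (Function.onFun Disjoint P)
  iUnion_eq_univ : ⋃ i, P i = univ

lemma IsMeasurablePartition.sum_measure_eq_one [MeasurableSpace α] [Fintype ι]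
    {P : ι → Set α} (hP : IsMeasurablePartition P) (μ : Measure α) [IsProbabilityMeasure μ] :
    ∑ i, μ (P i) = 1 := by
  rw [← measure_univ (μ := μ), ← hP.iUnion_eq_univ,
    measure_iUnion hP.pairwise_disjoint hP.measurableSet, tsum_fintype]

lemma IsMeasurablePartition.measure_le_add_of_mul_le [MeasurableSpace α] [Fintype ι]
    {P Q : ι → Set α} (hP : IsMeasurablePartition P) (hQ : IsMeasurablePartition Q)
    (μ : Measure α) [IsProbabilityMeasure μ] {c : ℝ≥0∞}
    (h : ∀ i j, μ (P i) * μ (P j) ≤ μ (Q i) * μ (Q j) + c) (i : ι) :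
    μ (P i) ≤ μ (Q i) + Fintype.card ι * c :=
  calc μ (P i) = ∑ j, μ (P i) * μ (P j) := by
        rw [← Finset.mul_sum, hP.sum_measure_eq_one, mul_one]
    _ ≤ ∑ j, (μ (Q i) * μ (Q j) + c) := Finset.sum_le_sum fun j _ => h i j
    _ = μ (Q i) + Fintype.card ι * c := by
      rw [Finset.sum_add_distrib, ← Finset.mul_sum, hQ.sum_measure_eq_one, mul_one,
        Finset.sum_const, Finset.card_univ, nsmul_eq_mul]

def ambiguousSet (G : ι → Set α) : Set α := {x | ¬∃! i, x ∈ G i}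

lemma measurableSet_ambiguousSet [MeasurableSpace α] [Countable ι] {G : ι → Set α}
    (hG : ∀ i, MeasurableSet (G i)) : MeasurableSet (ambiguousSet G) := by
  classical
  have : ambiguousSet G = (⋃ i, G i ∩ ⋂ j, ⋂ (_ : j ≠ i), (G j)ᶜ)ᶜ := by
    ext x
    simp [ambiguousSet, ExistsUnique, not_imp_not]
  rw [this]
  exact (MeasurableSet.iUnion fun i =>
    (hG i).inter <| .iInter fun j => .iInter fun _ => (hG j).compl).compl

variable [LinearOrder ι] [LocallyFiniteOrderBot ι]

def partitionOfCover (G : ι → Set α) : ι → Set α := disjointed fun i => G i ∪ ambiguousSet G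

lemma mem_partitionOfCover_iff {G : ι → Set α} {x : α} (hx : x ∉ ambiguousSet G) (i : ι) :
    x ∈ partitionOfCover G i ↔ x ∈ G i := by
  obtain ⟨l, -, huniq⟩ := not_not.1 hx
  simp only [partitionOfCover, disjointed_eq_inter_compl, mem_inter_iff, mem_union, mem_iInter,
    mem_compl_iff, hx, or_false]
  refine ⟨fun h => h.1, fun hi => ?_⟩
  obtain rfl := huniq i hi
  exact ⟨hi, fun j hj hjx => hj.ne (huniq j hjx)⟩

lemma measurableSet_partitionOfCover [MeasurableSpace α] [Countable ι] {G : ι → Set α}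
    (hG : ∀ i, MeasurableSet (G i)) (i : ι) : MeasurableSet (partitionOfCover G i) :=
  disjointedRec (fun _ j ht => ht.diff ((hG j).union (measurableSet_ambiguousSet hG)))
    ((hG i).union (measurableSet_ambiguousSet hG))

lemma isMeasurablePartition_partitionOfCover [MeasurableSpace α] [Countable ι] [Nonempty ι]
    {G : ι → Set α} (hG : ∀ i, MeasurableSet (G i)) :
    IsMeasurablePartition (partitionOfCover G) := by
  refine ⟨measurableSet_partitionOfCover hG, disjoint_disjointed _, ?_⟩
  rw [partitionOfCover, iUnion_disjointed, eq_univ_iff_forall]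
  intro x
  by_cases hx : x ∈ ambiguousSet G
  · exact mem_iUnion.2 ⟨Classical.arbitrary ι, Or.inr hx⟩
  · obtain ⟨i, hi, -⟩ := not_not.1 hx
    exact mem_iUnion.2 ⟨i, Or.inl hi⟩

end Partition

section Profile

variable {Ω₁ Ω₂ : Type*} {k : ℕ}

def profile (f : Fin k → Ω₁ → ℝ) (W : Ω₁ × Ω₁ × Ω₂ → ℝ) (x : Ω₁ × Ω₁ × Ω₂) :
    (Fin k → ℝ) × (Fin k → ℝ) × ℝ :=
  (fun i => f i x.1, fun i => f i x.2.1, W x)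

def unpackProfile (v : RE (2 * k + 1)) : (Fin k → ℝ) × (Fin k → ℝ) × ℝ :=
  (fun i => v ⟨2 * i, by omega⟩, fun i => v ⟨2 * i + 1, by omega⟩, v ⟨2 * k, by omega⟩)

lemma unpackProfile_sVec (f : Fin k → Ω₁ → ℝ) (W : Ω₁ × Ω₁ × Ω₂ → ℝ) (x : Ω₁ × Ω₁ × Ω₂) :
    unpackProfile (sVec k f W x) = profile f W x := by
  ext i <;> simp [unpackProfile, profile, sVec, Nat.mul_add_div]
  omega

lemma dist_unpackProfile_le (u v : RE (2 * k + 1)) :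
    dist (unpackProfile u) (unpackProfile v) ≤ dist u v := by
  simp only [unpackProfile, Prod.dist_eq]
  refine max_le ((dist_pi_le_iff dist_nonneg).2 fun i => PiLp.dist_apply_le _ _ _)
    (max_le ((dist_pi_le_iff dist_nonneg).2 fun i => PiLp.dist_apply_le _ _ _)
      (PiLp.dist_apply_le _ _ _))

lemma thickening_preimage_unpackProfile_subset (η : ℝ)
    (S : Set ((Fin k → ℝ) × (Fin k → ℝ) × ℝ)) :
    thickening η (unpackProfile ⁻¹' S) ⊆ unpackProfile ⁻¹' thickening η S := by
  intro u hu
  obtain ⟨v, hv, huv⟩ := mem_thickening_iff.1 hu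
  exact mem_thickening_iff.2 ⟨_, hv, (dist_unpackProfile_le u v).trans_lt huv⟩

def profileCell (t : ℝ) (i j : Fin k) (C : Set ℝ) : Set ((Fin k → ℝ) × (Fin k → ℝ) × ℝ) :=
  {p | t < p.1 i ∧ t < p.2.1 j ∧ p.2.2 ∈ C}

lemma abs_sub_apply_lt_of_dist_lt {p q : (Fin k → ℝ) × (Fin k → ℝ) × ℝ} {η : ℝ}
    (h : dist p q < η) :
    (∀ i, |p.1 i - q.1 i| < η) ∧ (∀ i, |p.2.1 i - q.2.1 i| < η) ∧ dist p.2.2 q.2.2 < η := by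
  rw [Prod.dist_eq, Prod.dist_eq, max_lt_iff, max_lt_iff] at h
  exact ⟨fun i => (dist_le_pi_dist p.1 q.1 i).trans_lt h.1,
    fun i => (dist_le_pi_dist p.2.1 q.2.1 i).trans_lt h.2.1, h.2.2⟩

lemma thickening_profileCell_subset (η t : ℝ) (i j : Fin k) (C : Set ℝ) :
    thickening η (profileCell (t + η) i j C) ⊆ profileCell t i j (thickening η C) := by
  intro p hp
  obtain ⟨q, ⟨hqi, hqj, hqC⟩, hpq⟩ := mem_thickening_iff.1 hp
  obtain ⟨h₁, h₂, h₃⟩ := abs_sub_apply_lt_of_dist_lt hpq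
  have := abs_lt.1 (h₁ i)
  have := abs_lt.1 (h₂ j)
  exact ⟨by linarith, by linarith, mem_thickening_iff.2 ⟨q.2.2, hqC, h₃⟩⟩

def indicators {ι : Type*} (P : ι → Set Ω₁) : ι → Ω₁ → ℝ := fun i => (P i).indicator 1

lemma indicators_mem_Icc (P : Fin k → Set Ω₁) (i : Fin k) (x : Ω₁) :
    indicators P i x ∈ Icc (-1 : ℝ) 1 := by
  by_cases hx : x ∈ P i <;> simp [indicators, hx]

lemma lt_indicator_one_iff {s : Set Ω₁} {x : Ω₁} {t : ℝ} (ht₀ : 0 ≤ t) (ht₁ : t < 1) :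
    t < s.indicator 1 x ↔ x ∈ s := by
  by_cases hx : x ∈ s <;> simp [hx, ht₁, ht₀.not_gt]

def edgeEvent (A B : Set Ω₁) (V : Ω₁ × Ω₁ × Ω₂ → ℝ) (C : Set ℝ) : Set (Ω₁ × Ω₁ × Ω₂) :=
  {x | x.1 ∈ A ∧ x.2.1 ∈ B ∧ V x ∈ C}

lemma profile_indicators_mem_profileCell {P : Fin k → Set Ω₁} {V : Ω₁ × Ω₁ × Ω₂ → ℝ} {t : ℝ}
    (ht₀ : 0 ≤ t) (ht₁ : t < 1) (i j : Fin k) (C : Set ℝ) :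
    {x | profile (indicators P) V x ∈ profileCell t i j C} = edgeEvent (P i) (P j) V C := by
  ext x
  simp only [profile, profileCell, edgeEvent, indicators, mem_ofPred_eq,
    lt_indicator_one_iff ht₀ ht₁]

/-- Within `η ≤ 1/2` of a standard basis vector, exactly one coordinate exceeds `1/2`. -/
lemma profile_indicators_not_mem_thickening {P : Fin k → Set Ω₁}
    (hPd : Pairwise (Function.onFun Disjoint P)) (hPu : ⋃ i, P i = univ)
    (V : Ω₁ × Ω₁ × Ω₂ → ℝ) {η : ℝ} (hη : η ≤ 1 / 2) (x : Ω₁ × Ω₁ × Ω₂) :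
    profile (indicators P) V x ∉
      thickening η (Prod.fst ⁻¹' ambiguousSet fun i => {a : Fin k → ℝ | 1 / 2 < a i}) := by
  intro hx
  obtain ⟨q, hq, hxq⟩ := mem_thickening_iff.1 hx
  obtain ⟨l, hl⟩ := mem_iUnion.1 (hPu ▸ mem_univ x.1)
  have hcoord := (abs_sub_apply_lt_of_dist_lt hxq).1
  refine hq ⟨l, ?_, fun m hm => by_contra fun hml => ?_⟩
  · have := abs_lt.1 (hcoord l)
    simp only [profile, indicators, indicator_of_mem hl, Pi.one_apply] at this
    show 1 / 2 < q.1 l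
    linarith
  · have hxm : x.1 ∉ P m := disjoint_right.1 (hPd hml) hl
    have := abs_lt.1 (hcoord m)
    simp only [profile, indicators, indicator_of_notMem hxm] at this
    exact absurd hm (by simp only [mem_ofPred_eq, not_lt]; linarith)

end Profile

section ProfileMeasure

variable {Ω₁ Ω₂ : Type*} [MeasurableSpace Ω₁] [MeasurableSpace Ω₂] {k : ℕ}

lemma measurable_unpackProfile : Measurable (unpackProfile (k := k)) :=
  (LipschitzWith.of_dist_le_mul (K := 1) fun u v => by
    simpa using dist_unpackProfile_le u v).continuous.measurable

lemma measurable_sVec {f : Fin k → Ω₁ → ℝ} {W : Ω₁ × Ω₁ × Ω₂ → ℝ}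
    (hf : ∀ i, Measurable (f i)) (hW : Measurable W) : Measurable (sVec k f W) := by
  refine (MeasurableEquiv.toLp 2 (Fin (2 * k + 1) → ℝ)).measurable.comp
    (measurable_pi_lambda _ fun l => ?_)
  split_ifs
  exacts [(hf _).comp measurable_fst, (hf _).comp measurable_snd.fst, hW]

lemma measurableSet_profileCell (t : ℝ) (i j : Fin k) {C : Set ℝ} (hC : MeasurableSet C) :
    MeasurableSet (profileCell t i j C) :=
  (measurableSet_lt measurable_const ((measurable_pi_apply i).comp measurable_fst)).inter <|
    (measurableSet_lt measurable_const ((measurable_pi_apply j).comp measurable_snd.fst)).inter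
      (hC.preimage measurable_snd.snd)

lemma measurable_indicators {ι : Type*} {P : ι → Set Ω₁} (hP : ∀ i, MeasurableSet (P i))
    (i : ι) : Measurable (indicators P i) :=
  measurable_const.indicator (hP i)

lemma Smeasure_preimage_unpackProfile (P₁ : Measure Ω₁) (P₂ : Measure Ω₂)
    {f : Fin k → Ω₁ → ℝ} {W : Ω₁ × Ω₁ × Ω₂ → ℝ} (hf : ∀ i, Measurable (f i))
    (hW : Measurable W) {S : Set ((Fin k → ℝ) × (Fin k → ℝ) × ℝ)} (hS : MeasurableSet S) :
    Smeasure P₁ P₂ f W (unpackProfile ⁻¹' S) =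
      P₁.prod (P₁.prod P₂) {x | profile f W x ∈ S} := by
  rw [Smeasure, Measure.map_apply (measurable_sVec hf hW) (measurable_unpackProfile hS)]
  simp only [preimage_preimage, unpackProfile_sVec]
  rfl

lemma measure_profile_le_of_levyProkhorovEDist_lt {P₁ : Measure Ω₁} {P₂ : Measure Ω₂}
    {f g : Fin k → Ω₁ → ℝ} {W U : Ω₁ × Ω₁ × Ω₂ → ℝ} (hf : ∀ i, Measurable (f i))
    (hg : ∀ i, Measurable (g i)) (hW : Measurable W) (hU : Measurable U) {η : ℝ}
    (hLP : levyProkhorovEDist (Smeasure P₁ P₂ f W) (Smeasure P₁ P₂ g U) < ENNReal.ofReal η)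
    {S : Set ((Fin k → ℝ) × (Fin k → ℝ) × ℝ)} (hS : MeasurableSet S) :
    P₁.prod (P₁.prod P₂) {x | profile f W x ∈ S} ≤
      P₁.prod (P₁.prod P₂) {x | profile g U x ∈ thickening η S} + ENNReal.ofReal η := by
  have hη : 0 ≤ η := (ENNReal.ofReal_pos.1 (pos_of_gt hLP)).le
  have h := left_measure_le_of_levyProkhorovEDist_lt hLP (measurable_unpackProfile hS)
  rw [ENNReal.toReal_ofReal hη, Smeasure_preimage_unpackProfile P₁ P₂ hf hW hS] at h
  refine h.trans (add_le_add_left ?_ _)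
  rw [← Smeasure_preimage_unpackProfile P₁ P₂ hg hU isOpen_thickening.measurableSet]
  exact measure_mono (thickening_preimage_unpackProfile_subset η S)

section Probability

variable (P₁ : Measure Ω₁) (P₂ : Measure Ω₂) [IsProbabilityMeasure P₁] [IsProbabilityMeasure P₂]

lemma measure_fst_mem (A : Set Ω₁) : P₁.prod (P₁.prod P₂) {x | x.1 ∈ A} = P₁ A := by
  rw [show {x : Ω₁ × Ω₁ × Ω₂ | x.1 ∈ A} = A ×ˢ univ by ext; simp, Measure.prod_prod,
    measure_univ, mul_one]

lemma measure_snd_fst_mem (A : Set Ω₁) : P₁.prod (P₁.prod P₂) {x | x.2.1 ∈ A} = P₁ A := by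
  rw [show {x : Ω₁ × Ω₁ × Ω₂ | x.2.1 ∈ A} = univ ×ˢ A ×ˢ univ by ext; simp, Measure.prod_prod,
    Measure.prod_prod, measure_univ, measure_univ, one_mul, mul_one]

lemma measure_edgeEvent_univ (A B : Set Ω₁) (V : Ω₁ × Ω₁ × Ω₂ → ℝ) :
    P₁.prod (P₁.prod P₂) (edgeEvent A B V univ) = P₁ A * P₁ B := by
  have : edgeEvent A B V univ = A ×ˢ B ×ˢ univ := by ext x; simp [edgeEvent]
  rw [this, Measure.prod_prod, Measure.prod_prod, measure_univ, mul_one]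

lemma measure_edgeEvent_le (A A' B B' : Set Ω₁) (V : Ω₁ × Ω₁ × Ω₂ → ℝ) (C : Set ℝ) :
    P₁.prod (P₁.prod P₂) (edgeEvent A B V C) ≤
      P₁.prod (P₁.prod P₂) (edgeEvent A' B' V C) + P₁ (A \ A') + P₁ (B \ B') := by
  rw [← measure_fst_mem P₁ P₂, ← measure_snd_fst_mem P₁ P₂]
  refine (measure_mono fun x hx => ?_).trans
    ((measure_union_le _ _).trans (add_le_add (measure_union_le _ _) le_rfl))
  obtain ⟨hA, hB, hC⟩ := hx
  by_cases hA' : x.1 ∈ A'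
  · by_cases hB' : x.2.1 ∈ B'
    · exact Or.inl (Or.inl ⟨hA', hB', hC⟩)
    · exact Or.inr ⟨hB, hB'⟩
  · exact Or.inl (Or.inr ⟨hA, hA'⟩)

end Probability

end ProfileMeasure

section Threshold

variable {Ω₁ Ω₂ : Type*} [MeasurableSpace Ω₁] [MeasurableSpace Ω₂] {k : ℕ}
  {P₁ : Measure Ω₁} {P₂ : Measure Ω₂}
  {P : Fin k → Set Ω₁} {g : Fin k → Ω₁ → ℝ} {W U : Ω₁ × Ω₁ × Ω₂ → ℝ} {η : ℝ}

def halfSuperlevel {ι : Type*} (g : ι → Ω₁ → ℝ) (i : ι) : Set Ω₁ := {x | 1 / 2 < g i x}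

lemma measurableSet_halfSuperlevel {ι : Type*} {g : ι → Ω₁ → ℝ} (hg : ∀ i, Measurable (g i))
    (i : ι) : MeasurableSet (halfSuperlevel g i) :=
  measurableSet_lt measurable_const (hg i)

lemma measure_ambiguousSet_halfSuperlevel_le [IsProbabilityMeasure P₁] [IsProbabilityMeasure P₂]
    (hP : IsMeasurablePartition P) (hg : ∀ i, Measurable (g i)) (hW : Measurable W)
    (hU : Measurable U) (hη : η ≤ 1 / 2)
    (hLP : levyProkhorovEDist (Smeasure P₁ P₂ (indicators P) W) (Smeasure P₁ P₂ g U) <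
      ENNReal.ofReal η) :
    P₁ (ambiguousSet (halfSuperlevel g)) ≤ ENNReal.ofReal η := by
  have hS : MeasurableSet (Prod.fst ⁻¹' ambiguousSet fun i => {a : Fin k → ℝ | 1 / 2 < a i} :
      Set ((Fin k → ℝ) × (Fin k → ℝ) × ℝ)) :=
    (measurableSet_ambiguousSet fun i =>
      measurableSet_lt measurable_const (measurable_pi_apply i)).preimage measurable_fst
  have h := measure_profile_le_of_levyProkhorovEDist_lt hg
    (measurable_indicators hP.measurableSet) hU hW ((levyProkhorovEDist_comm _ _).trans_lt hLP) hS
  simp only [profile_indicators_not_mem_thickening hP.pairwise_disjoint hP.iUnion_eq_univ W hη,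
    ofPred_false, measure_empty, zero_add] at h
  rwa [← measure_fst_mem P₁ P₂]

lemma measure_edgeEvent_le_halfSuperlevel (hP : ∀ i, MeasurableSet (P i))
    (hg : ∀ i, Measurable (g i)) (hW : Measurable W) (hU : Measurable U) (hη : η < 1 / 2)
    (hLP : levyProkhorovEDist (Smeasure P₁ P₂ (indicators P) W) (Smeasure P₁ P₂ g U) <
      ENNReal.ofReal η) (i j : Fin k) {C : Set ℝ} (hC : MeasurableSet C) :
    P₁.prod (P₁.prod P₂) (edgeEvent (P i) (P j) W C) ≤
      P₁.prod (P₁.prod P₂) (edgeEvent (halfSuperlevel g i) (halfSuperlevel g j) U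
        (thickening η C)) + ENNReal.ofReal η := by
  have hη₀ : 0 ≤ η := (ENNReal.ofReal_pos.1 (pos_of_gt hLP)).le
  rw [← profile_indicators_mem_profileCell (P := P) (t := 1 / 2 + η) (by linarith)
    (by linarith)]
  refine (measure_profile_le_of_levyProkhorovEDist_lt (measurable_indicators hP) hg hW hU hLP
    (measurableSet_profileCell _ i j hC)).trans (add_le_add_left (measure_mono ?_) _)
  exact fun x hx => (thickening_profileCell_subset η (1 / 2) i j C hx :)

lemma measure_edgeEvent_halfSuperlevel_le (hP : ∀ i, MeasurableSet (P i))
    (hg : ∀ i, Measurable (g i)) (hW : Measurable W) (hU : Measurable U) (hη : η < 1 / 2)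
    (hLP : levyProkhorovEDist (Smeasure P₁ P₂ (indicators P) W) (Smeasure P₁ P₂ g U) <
      ENNReal.ofReal η) (i j : Fin k) {C : Set ℝ} (hC : MeasurableSet C) :
    P₁.prod (P₁.prod P₂) (edgeEvent (halfSuperlevel g i) (halfSuperlevel g j) U C) ≤
      P₁.prod (P₁.prod P₂) (edgeEvent (P i) (P j) W (thickening η C)) + ENNReal.ofReal η := by
  have hη₀ : 0 ≤ η := (ENNReal.ofReal_pos.1 (pos_of_gt hLP)).le
  rw [← profile_indicators_mem_profileCell (P := P) (t := 1 / 2 - η) (by linarith)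
    (by linarith)]
  refine (measure_profile_le_of_levyProkhorovEDist_lt hg (measurable_indicators hP) hU hW
    ((levyProkhorovEDist_comm _ _).trans_lt hLP) (measurableSet_profileCell (1 / 2) i j hC)).trans
    (add_le_add_left (measure_mono ?_) _)
  intro x hx
  exact (thickening_profileCell_subset η (1 / 2 - η) i j C (by rwa [sub_add_cancel]) :)

end Threshold

section Graphon

variable {Ω₂ : Type*} [MeasurableSpace Ω₂] (P₂ : Measure Ω₂)
  {W : unitInterval × unitInterval × Ω₂ → ℝ}

lemma assocGraphon_apply (hW : Measurable W) (p : unitInterval × unitInterval) {C : Set ℝ}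
    (hC : MeasurableSet C) : assocGraphon P₂ W p C = P₂ {ω | W (p.1, p.2, ω) ∈ C} :=
  Measure.map_apply ((hW.comp measurable_prodMk_left).comp measurable_prodMk_left) hC

variable [IsProbabilityMeasure P₂]

lemma measurable_assocGraphon (hW : Measurable W) : Measurable (assocGraphon P₂ W) := by
  refine Measure.measurable_of_measurable_coe _ fun C hC => ?_
  simp_rw [assocGraphon_apply P₂ hW _ hC]
  exact measurable_measure_prodMk_left
    (hC.preimage (hW.comp MeasurableEquiv.prodAssoc.measurable))

lemma graphonInt_assocGraphon_prod (hW : Measurable W) {A B : Set unitInterval}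
    (hA : MeasurableSet A) (hB : MeasurableSet B) {C : Set ℝ} (hC : MeasurableSet C) :
    graphonInt (assocGraphon P₂ W) (A ×ˢ B) C =
      volume.prod (volume.prod P₂) (edgeEvent A B W C) := by
  have hE : MeasurableSet (edgeEvent A B W C) :=
    (hA.preimage measurable_fst).inter ((hB.preimage measurable_snd.fst).inter (hW hC))
  rw [graphonInt, Measure.bind_apply hC (measurable_assocGraphon P₂ hW).aemeasurable,
    ← Measure.prodAssoc_prod, Measure.map_apply MeasurableEquiv.prodAssoc.measurable hE,
    Measure.prod_apply (hE.preimage MeasurableEquiv.prodAssoc.measurable),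
    ← lintegral_indicator (hA.prod hB)]
  refine lintegral_congr fun p => ?_
  by_cases hp : p ∈ A ×ˢ B
  · rw [indicator_of_mem hp, assocGraphon_apply P₂ hW p hC]
    congr 1
    ext ω
    simp [edgeEvent, MeasurableEquiv.prodAssoc, hp.1, hp.2]
  · rw [indicator_of_notMem hp]
    symm
    convert measure_empty (μ := P₂)
    ext ω
    simp only [edgeEvent, mem_prod, not_and] at hp ⊢
    simp [MeasurableEquiv.prodAssoc]
    tauto

lemma volume_mul_volume_le_of_graphonInt_le {V V' : unitInterval × unitInterval × Ω₂ → ℝ}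
    (hV : Measurable V) (hV' : Measurable V') {A B A' B' : Set unitInterval}
    (hA : MeasurableSet A) (hB : MeasurableSet B) (hA' : MeasurableSet A')
    (hB' : MeasurableSet B') {r : ℝ} {c : ℝ≥0∞}
    (h : graphonInt (assocGraphon P₂ V) (A ×ˢ B) univ ≤
      graphonInt (assocGraphon P₂ V') (A' ×ˢ B') (thickening r univ) + c) :
    volume A * volume B ≤ volume A' * volume B' + c := by
  rw [graphonInt_assocGraphon_prod P₂ hV hA hB MeasurableSet.univ, measure_edgeEvent_univ,
    graphonInt_assocGraphon_prod P₂ hV' hA' hB' isOpen_thickening.measurableSet] at h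
  rw [← measure_edgeEvent_univ volume P₂ A' B' V']
  refine h.trans (add_le_add_left (measure_mono ?_) _)
  exact fun x hx => ⟨hx.1, hx.2.1, mem_univ _⟩

end Graphon

lemma smul_quotientOf (K : unitInterval × unitInterval → Measure ℝ) {k : ℕ}
    (P : Fin k → Set unitInterval) (i j : Fin k) :
    ENNReal.ofReal ((quotientOf K P).1 i * (quotientOf K P).1 j) • (quotientOf K P).2 i j =
      graphonInt K (P i ×ˢ P j) := by
  have hfin : volume (P i) * volume (P j) ≠ ∞ :=
    ENNReal.mul_ne_top (measure_ne_top _ _) (measure_ne_top _ _)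
  by_cases h : 0 < volume (P i) * volume (P j)
  · simp only [quotientOf, if_pos h]
    rw [← ENNReal.toReal_mul, ENNReal.ofReal_toReal hfin, smul_smul,
      ENNReal.mul_inv_cancel h.ne' hfin, one_smul]
  · have h0 : (volume.prod volume) (P i ×ˢ P j) = 0 := by
      rw [Measure.prod_prod]
      exact nonpos_iff_eq_zero.1 (not_lt.1 h)
    simp only [quotientOf, if_neg h, smul_zero]
    rw [graphonInt, Measure.restrict_eq_zero.2 h0, Measure.bind_zero_left]

lemma d1_comm {k : ℕ} (q q' : (Fin k → ℝ) × (Fin k → Fin k → Measure ℝ)) :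
    d1 q q' = d1 q' q := by
  simp only [d1, abs_sub_comm, levyProkhorovDist_comm]

lemma d1H_le {k : ℕ} {A B : Set ((Fin k → ℝ) × (Fin k → Fin k → Measure ℝ))} {ε : ℝ}
    (hε : 0 ≤ ε) (hAB : ∀ q ∈ A, ∃ q' ∈ B, d1 q q' ≤ ε)
    (hBA : ∀ q' ∈ B, ∃ q ∈ A, d1 q q' ≤ ε) : d1H A B ≤ ε := by
  refine ENNReal.toReal_le_of_le_ofReal hε
    (max_le (iSup₂_le fun q hq => ?_) (iSup₂_le fun q' hq' => ?_))
  · obtain ⟨q', hq', hd⟩ := hAB q hq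
    exact (iInf₂_le q' hq').trans (ENNReal.ofReal_le_ofReal hd)
  · obtain ⟨q, hq, hd⟩ := hBA q' hq'
    exact (iInf₂_le q hq).trans (ENNReal.ofReal_le_ofReal hd)

section Quotient

variable {Ω₂ : Type*} [MeasurableSpace Ω₂] {P₂ : Measure Ω₂} [IsProbabilityMeasure P₂] {k : ℕ}
  {P : Fin k → Set unitInterval} {g : Fin k → unitInterval → ℝ}
  {W U : unitInterval × unitInterval × Ω₂ → ℝ} {η : ℝ}

/-- The error `3η` is `η` from comparing `P` with `halfSuperlevel g`, plus `η` for each endpoint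
moved by the rounding. -/
lemma graphonInt_partitionOfCover_le (hP : IsMeasurablePartition P)
    (hg : ∀ i, Measurable (g i)) (hW : Measurable W) (hU : Measurable U) (hη : η < 1 / 2)
    (hLP : levyProkhorovEDist (Smeasure volume P₂ (indicators P) W) (Smeasure volume P₂ g U) <
      ENNReal.ofReal η) (i j : Fin k) {C : Set ℝ} (hC : MeasurableSet C) :
    graphonInt (assocGraphon P₂ W) (P i ×ˢ P j) C ≤
        graphonInt (assocGraphon P₂ U) (partitionOfCover (halfSuperlevel g) i ×ˢ
          partitionOfCover (halfSuperlevel g) j) (thickening η C) + ENNReal.ofReal (3 * η) ∧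
      graphonInt (assocGraphon P₂ U) (partitionOfCover (halfSuperlevel g) i ×ˢ
          partitionOfCover (halfSuperlevel g) j) C ≤
        graphonInt (assocGraphon P₂ W) (P i ×ˢ P j) (thickening η C) + ENNReal.ofReal (3 * η) := by
  have hη₀ : 0 ≤ η := (ENNReal.ofReal_pos.1 (pos_of_gt hLP)).le
  have hQ := measurableSet_partitionOfCover (measurableSet_halfSuperlevel hg)
  have hamb := measure_ambiguousSet_halfSuperlevel_le hP hg hW hU hη.le hLP
  have hGQ (l : Fin k) :
      volume (halfSuperlevel g l \ partitionOfCover (halfSuperlevel g) l) ≤ ENNReal.ofReal η :=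
    (measure_mono fun x hx => by_contra fun hx' =>
      hx.2 ((mem_partitionOfCover_iff hx' l).2 hx.1)).trans hamb
  have hQG (l : Fin k) :
      volume (partitionOfCover (halfSuperlevel g) l \ halfSuperlevel g l) ≤ ENNReal.ofReal η :=
    (measure_mono fun x hx => by_contra fun hx' =>
      hx.2 ((mem_partitionOfCover_iff hx' l).1 hx.1)).trans hamb
  have h3 : ENNReal.ofReal (3 * η) =
      ENNReal.ofReal η + ENNReal.ofReal η + ENNReal.ofReal η := by
    rw [← ENNReal.ofReal_add hη₀ hη₀, ← ENNReal.ofReal_add (by positivity) hη₀]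
    ring_nf
  simp only [graphonInt_assocGraphon_prod P₂ hW (hP.measurableSet _) (hP.measurableSet _),
    graphonInt_assocGraphon_prod P₂ hU (hQ _) (hQ _), hC,
    isOpen_thickening.measurableSet, h3]
  constructor
  · refine (measure_edgeEvent_le_halfSuperlevel hP.measurableSet hg hW hU hη hLP i j hC).trans ?_
    grw [measure_edgeEvent_le _ _ _ (partitionOfCover (halfSuperlevel g) i) _
      (partitionOfCover (halfSuperlevel g) j), hGQ i, hGQ j]
    exact (by ring : _ = _).le
  · grw [measure_edgeEvent_le _ _ _ (halfSuperlevel g i) _ (halfSuperlevel g j), hQG i, hQG j,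
      measure_edgeEvent_halfSuperlevel_le hP.measurableSet hg hW hU hη hLP i j hC]
    exact (by ring : _ = _).le

variable [NeZero k]

/-- The vertex weights are row sums of the edge masses, so the edge estimates with `C = univ`
control them. -/
lemma abs_volume_sub_volume_partitionOfCover_le (hP : IsMeasurablePartition P)
    (hg : ∀ i, Measurable (g i)) (hW : Measurable W) (hU : Measurable U) (hη : η < 1 / 2)
    (hLP : levyProkhorovEDist (Smeasure volume P₂ (indicators P) W) (Smeasure volume P₂ g U) <
      ENNReal.ofReal η) (i : Fin k) :
    |(volume (P i)).toReal - (volume (partitionOfCover (halfSuperlevel g) i)).toReal| ≤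
      k * (3 * η) := by
  have hη₀ : 0 ≤ η := (ENNReal.ofReal_pos.1 (pos_of_gt hLP)).le
  have hQ := isMeasurablePartition_partitionOfCover (measurableSet_halfSuperlevel hg)
  have hcard : (Fintype.card (Fin k) : ℝ≥0∞) * ENNReal.ofReal (3 * η) =
      ENNReal.ofReal (k * (3 * η)) := by
    rw [Fintype.card_fin, ENNReal.ofReal_mul (Nat.cast_nonneg k), ENNReal.ofReal_natCast]
  refine ENNReal.abs_toReal_sub_le (measure_ne_top _ _) (measure_ne_top _ _) (by positivity)
    ?_ ?_ <;> rw [← hcard]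
  · refine hP.measure_le_add_of_mul_le hQ volume (fun i j => ?_) i
    exact volume_mul_volume_le_of_graphonInt_le P₂ hW hU (hP.measurableSet i)
      (hP.measurableSet j) (hQ.measurableSet i) (hQ.measurableSet j)
      (graphonInt_partitionOfCover_le hP hg hW hU hη hLP i j MeasurableSet.univ).1
  · refine hQ.measure_le_add_of_mul_le hP volume (fun i j => ?_) i
    exact volume_mul_volume_le_of_graphonInt_le P₂ hU hW (hQ.measurableSet i)
      (hQ.measurableSet j) (hP.measurableSet i) (hP.measurableSet j)
      (graphonInt_partitionOfCover_le hP hg hW hU hη hLP i j MeasurableSet.univ).2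

lemma d1_quotientOf_partitionOfCover_le (hP : IsMeasurablePartition P)
    (hg : ∀ i, Measurable (g i)) (hW : Measurable W) (hU : Measurable U) (hη : η < 1 / 2)
    (hLP : levyProkhorovEDist (Smeasure volume P₂ (indicators P) W) (Smeasure volume P₂ g U) <
      ENNReal.ofReal η) :
    d1 (quotientOf (assocGraphon P₂ W) P)
      (quotientOf (assocGraphon P₂ U) (partitionOfCover (halfSuperlevel g))) ≤
        6 * k ^ 2 * η := by
  have hη₀ : 0 ≤ η := (ENNReal.ofReal_pos.1 (pos_of_gt hLP)).le
  have hedge (i j : Fin k) : levyProkhorovDist (graphonInt (assocGraphon P₂ W) (P i ×ˢ P j))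
      (graphonInt (assocGraphon P₂ U) (partitionOfCover (halfSuperlevel g) i ×ˢ
        partitionOfCover (halfSuperlevel g) j)) ≤ 3 * η :=
    ENNReal.toReal_le_of_le_ofReal (by positivity) <|
      levyProkhorovEDist_le_of_forall_le_thickening (by linarith)
        fun C hC => graphonInt_partitionOfCover_le hP hg hW hU hη hLP i j hC
  simp only [d1, smul_quotientOf]
  calc _ ≤ ∑ _i : Fin k, k * (3 * η) + ∑ _i : Fin k, ∑ _j : Fin k, 3 * η :=
        add_le_add (Finset.sum_le_sum fun i _ =>
          abs_volume_sub_volume_partitionOfCover_le hP hg hW hU hη hLP i)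
          (Finset.sum_le_sum fun i _ => Finset.sum_le_sum fun j _ => hedge i j)
    _ = 6 * k ^ 2 * η := by simp; ring

lemma exists_d1_le_of_eHausLP_lt (hW : Measurable W) (hU : Measurable U) (hη : η < 1 / 2)
    (hH : eHausLP (SkSet volume P₂ k W) (SkSet volume P₂ k U) < ENNReal.ofReal η) :
    ∀ R ∈ Qk (assocGraphon P₂ W) k, ∃ R' ∈ Qk (assocGraphon P₂ U) k,
      d1 R R' ≤ 6 * k ^ 2 * η := by
  rintro _ ⟨P, hPm, hPd, hPu, rfl⟩
  obtain ⟨_, ⟨g, hg, -, rfl⟩, hLP⟩ := exists_levyProkhorovEDist_lt_of_eHausLP_lt hH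
    ⟨indicators P, measurable_indicators hPm, indicators_mem_Icc P, rfl⟩
  have hQ := isMeasurablePartition_partitionOfCover (measurableSet_halfSuperlevel hg)
  exact ⟨_, ⟨_, hQ.measurableSet, hQ.pairwise_disjoint, hQ.iUnion_eq_univ, rfl⟩,
    d1_quotientOf_partitionOfCover_le ⟨hPm, hPd, hPu⟩ hg hW hU hη hLP⟩

end Quotient

lemma PVar.isProbabilityMeasure_of_mem_Sk (V : PVar) {k : ℕ} {μ : Measure (RE (2 * k + 1))}
    (hμ : μ ∈ V.Sk k) : IsProbabilityMeasure μ := by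
  have := V.prob₁
  have := V.prob₂
  obtain ⟨f, hf, -, rfl⟩ := hμ
  exact Measure.isProbabilityMeasure_map (measurable_sVec hf V.meas).aemeasurable

lemma PVar.Sk_nonempty (V : PVar) (k : ℕ) : (V.Sk k).Nonempty :=
  ⟨_, fun _ _ => 0, fun _ => measurable_const, fun _ _ => by norm_num, rfl⟩

lemma PVar.eHausLP_Sk_le_one (V U : PVar) (k : ℕ) : eHausLP (V.Sk k) (U.Sk k) ≤ 1 :=
  eHausLP_le_one (V.Sk_nonempty k) (U.Sk_nonempty k) (fun _ => V.isProbabilityMeasure_of_mem_Sk)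
    (fun _ => U.isProbabilityMeasure_of_mem_Sk)

lemma inv_two_pow_mul_dHLP_le_dM (V U : PVar) (n : ℕ) :
    (2 : ℝ)⁻¹ ^ (n + 1) * dHLP (V.Sk (n + 1)) (U.Sk (n + 1)) ≤ dM V U := by
  have hnonneg (m : ℕ) : 0 ≤ (2 : ℝ)⁻¹ ^ (m + 1) * dHLP (V.Sk (m + 1)) (U.Sk (m + 1)) :=
    mul_nonneg (by positivity) ENNReal.toReal_nonneg
  have hle (m : ℕ) :
      (2 : ℝ)⁻¹ ^ (m + 1) * dHLP (V.Sk (m + 1)) (U.Sk (m + 1)) ≤ (2 : ℝ)⁻¹ ^ m := by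
    refine (mul_le_of_le_one_right (by positivity) ?_).trans
      (pow_le_pow_of_le_one (by norm_num) (by norm_num) m.le_succ)
    exact ENNReal.toReal_le_of_le_ofReal zero_le_one
      (by simpa using V.eHausLP_Sk_le_one U (m + 1))
  exact (Summable.of_nonneg_of_le hnonneg hle
    (summable_geometric_of_lt_one (by norm_num) (by norm_num))).le_tsum n fun m _ => hnonneg m

lemma eHausLP_Sk_lt_of_dM_lt {V U : PVar} {k : ℕ} [NeZero k] {η : ℝ}
    (h : dM V U < (2 : ℝ)⁻¹ ^ k * η) : eHausLP (V.Sk k) (U.Sk k) < ENNReal.ofReal η := by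
  obtain ⟨n, rfl⟩ := Nat.exists_eq_succ_of_ne_zero (NeZero.ne k)
  refine (ENNReal.lt_ofReal_iff_toReal_lt
    (ne_top_of_le_ne_top ENNReal.one_ne_top (V.eHausLP_Sk_le_one U _))).2 ?_
  exact lt_of_mul_lt_mul_left ((inv_two_pow_mul_dHLP_le_dM V U n).trans_lt h) (by positivity)

lemma quotient_sets_close_of_dM_lt {k : ℕ} [NeZero k] {Ω₂ : Type*} [MeasurableSpace Ω₂]
    {P₂ : Measure Ω₂} [IsProbabilityMeasure P₂] {U W : unitInterval × unitInterval × Ω₂ → ℝ}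
    (hU : Measurable U) (hW : Measurable W) {η : ℝ} (hη : η < 1 / 2)
    (h : dM (PVar.ofUnitInterval P₂ U hU) (PVar.ofUnitInterval P₂ W hW) < (2 : ℝ)⁻¹ ^ k * η) :
    (∀ R ∈ Qk (assocGraphon P₂ W) k, ∃ R' ∈ Qk (assocGraphon P₂ U) k, d1 R R' ≤ 6 * k ^ 2 * η) ∧
      ∀ R' ∈ Qk (assocGraphon P₂ U) k, ∃ R ∈ Qk (assocGraphon P₂ W) k, d1 R R' ≤ 6 * k ^ 2 * η := by
  have hUW : eHausLP (SkSet volume P₂ k U) (SkSet volume P₂ k W) < ENNReal.ofReal η :=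
    eHausLP_Sk_lt_of_dM_lt h
  refine ⟨exists_d1_le_of_eHausLP_lt hW hU hη ((eHausLP_comm _ _).trans_lt hUW), fun R' hR' => ?_⟩
  obtain ⟨R, hR, hd⟩ := exists_d1_le_of_eHausLP_lt hU hW hη hUW R' hR'
  exact ⟨R, hR, d1_comm R R' ▸ hd⟩

lemma exists_dM_bound_quotient_sets_close {k : ℕ} (hk : 1 ≤ k) {ε : ℝ} (hε : 0 < ε) :
    ∃ δ > (0 : ℝ), ∀ (Ω₂ : Type*) [MeasurableSpace Ω₂] (P₂ : Measure Ω₂)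
      [IsProbabilityMeasure P₂] (U W : unitInterval × unitInterval × Ω₂ → ℝ)
      (hU : Measurable U) (hW : Measurable W),
      dM (PVar.ofUnitInterval P₂ U hU) (PVar.ofUnitInterval P₂ W hW) ≤ δ →
      ((∀ R ∈ Qk (assocGraphon P₂ W) k, ∃ R' ∈ Qk (assocGraphon P₂ U) k, d1 R R' ≤ ε) ∧
       (∀ R' ∈ Qk (assocGraphon P₂ U) k, ∃ R ∈ Qk (assocGraphon P₂ W) k, d1 R R' ≤ ε) ∧
       d1H (Qk (assocGraphon P₂ W) k) (Qk (assocGraphon P₂ U) k) ≤ ε) := by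
  have : NeZero k := ⟨by omega⟩
  have hk₀ : (0 : ℝ) < 6 * k ^ 2 := by positivity
  set η := min (ε / (6 * k ^ 2)) (1 / 4)
  have hη : 0 < η := lt_min (div_pos hε hk₀) (by norm_num)
  have hηε : 6 * k ^ 2 * η ≤ ε := (mul_le_mul_of_nonneg_left (min_le_left _ _) hk₀.le).trans
    (mul_div_cancel₀ ε hk₀.ne').le
  refine ⟨(2 : ℝ)⁻¹ ^ k * η / 2, by positivity, fun Ω₂ _ P₂ _ U W hU hW hδ => ?_⟩
  obtain ⟨hWU, hUW⟩ := quotient_sets_close_of_dM_lt hU hW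
    ((min_le_right _ _).trans_lt (by norm_num)) (hδ.trans_lt (half_lt_self (by positivity)))
  have hWU' : ∀ R ∈ Qk (assocGraphon P₂ W) k, ∃ R' ∈ Qk (assocGraphon P₂ U) k, d1 R R' ≤ ε :=
    fun R hR => (hWU R hR).imp fun _ h => ⟨h.1, h.2.trans hηε⟩
  have hUW' : ∀ R' ∈ Qk (assocGraphon P₂ U) k, ∃ R ∈ Qk (assocGraphon P₂ W) k, d1 R R' ≤ ε :=
    fun R' hR' => (hUW R' hR').imp fun _ h => ⟨h.1, h.2.trans hηε⟩
  exact ⟨hWU', hUW', d1H_le hε.le hWU' hUW'⟩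

/-- For every `k ≥ 1` and `ε > 0` there is `δ > 0` such that any two
P-variables `U, W` on `[0,1] × [0,1] × Ω₂` with `d_M(U,W) ≤ δ` have quotient sets with
`d_{1,H}(Q_k(W̃), Q_k(Ũ)) ≤ ε` (each quotient of one is `ε`-close in `d₁` to a quotient
of the other, and vice versa).  In particular, if a sequence `(W_n)` of such
P-variables is Cauchy in `d_M`, then for every `k ≥ 1` the sequence of quotient sets
`(Q_k(W̃_n))` is Cauchy in `d_{1,H}`. -/
theorem quotient_sets_close_of_dM_close :
    (∀ k : ℕ, 1 ≤ k → ∀ ε > (0 : ℝ), ∃ δ > (0 : ℝ),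
      ∀ (Ω₂ : Type u) [MeasurableSpace Ω₂] (P₂ : Measure Ω₂)
        [IsProbabilityMeasure P₂]
        (U W : unitInterval × unitInterval × Ω₂ → ℝ)
        (hU : Measurable U) (hW : Measurable W),
        dM (PVar.ofUnitInterval P₂ U hU) (PVar.ofUnitInterval P₂ W hW) ≤ δ →
        ((∀ R ∈ Qk (assocGraphon P₂ W) k,
            ∃ R' ∈ Qk (assocGraphon P₂ U) k, d1 R R' ≤ ε) ∧
         (∀ R' ∈ Qk (assocGraphon P₂ U) k,
            ∃ R ∈ Qk (assocGraphon P₂ W) k, d1 R R' ≤ ε) ∧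
         d1H (Qk (assocGraphon P₂ W) k) (Qk (assocGraphon P₂ U) k) ≤ ε)) ∧
    (∀ (Ω₂ : Type u) [MeasurableSpace Ω₂] (P₂ : Measure Ω₂)
      [IsProbabilityMeasure P₂]
      (W : ℕ → unitInterval × unitInterval × Ω₂ → ℝ) (hW : ∀ n, Measurable (W n)),
      (∀ ε > (0 : ℝ), ∃ N : ℕ, ∀ m ≥ N, ∀ n ≥ N,
        dM (PVar.ofUnitInterval P₂ (W m) (hW m))
           (PVar.ofUnitInterval P₂ (W n) (hW n)) < ε) →
      ∀ k : ℕ, 1 ≤ k → ∀ ε > (0 : ℝ), ∃ N : ℕ, ∀ m ≥ N, ∀ n ≥ N,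
        d1H (Qk (assocGraphon P₂ (W m)) k) (Qk (assocGraphon P₂ (W n)) k) < ε) := by
  refine ⟨fun k hk ε hε => exists_dM_bound_quotient_sets_close hk hε,
    fun Ω₂ _ P₂ _ W hW hcauchy k hk ε hε => ?_⟩
  obtain ⟨δ, hδ, hclose⟩ := exists_dM_bound_quotient_sets_close hk (half_pos hε)
  obtain ⟨N, hN⟩ := hcauchy δ hδ
  exact ⟨N, fun m hm n hn =>
    (hclose Ω₂ P₂ (W n) (W m) (hW n) (hW m) (hN n hn m hm).le).2.2.trans_lt (half_lt_self hε)⟩
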